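/- (Propagation of the Lorentz gauge constraint) Let (u, φ, A) be a sufficiently regular solution of i∂_t u = (−Δ_A + φ)u, □φ = |u|², □A = J with J = 2 Im ū∇_A u. If ∂_tφ(0) + div A(0) = 0 and ∂_t(∂_tφ + div A)(0) = 0, then ∂_tφ + div A = 0 on the whole existence interval. -/

import Mathlib

open MeasureTheory Real Complex Set Function
open scoped ENNReal NNReal

noncomputable section

/-- Three-dimensional Euclidean space. -/
abbrev E3 := EuclideanSpace ℝ (Fin 3)

/-- Standard basis vector. -/
def e3 (i : Fin 3) : E3 := EuclideanSpace.single i 1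

/-- Partial derivative of a complex-valued function. -/
def pd (i : Fin 3) (f : E3 → ℂ) (x : E3) : ℂ := fderiv ℝ f x (e3 i)

/-- Partial derivative of a real-valued function. -/
def pdR (i : Fin 3) (f : E3 → ℝ) (x : E3) : ℝ := fderiv ℝ f x (e3 i)

/-- Laplacian of a complex-valued function. -/
def lap (f : E3 → ℂ) (x : E3) : ℂ := ∑ i, pd i (pd i f) x

/-- Laplacian of a real-valued function. -/
def lapR (f : E3 → ℝ) (x : E3) : ℝ := ∑ i, pdR i (pdR i f) x

/-- Divergence of a vector field. -/
def divg (A : E3 → E3) (x : E3) : ℝ := ∑ i, pdR i (fun y => A y i) x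

/-- `A · ∇f` for a real vector field `A` and complex `f`. -/
def dotGrad (A : E3 → E3) (f : E3 → ℂ) (x : E3) : ℂ := ∑ i, (A x i : ℂ) * pd i f x

/-- Magnetic Schrödinger (covariant) Laplacian `Δ_A = (∇ - iA)²` for divergence-free `A`. -/
def deltaA (A : E3 → E3) (f : E3 → ℂ) (x : E3) : ℂ :=
  lap f x - 2 * Complex.I * dotGrad A f x - (Complex.I * (divg A x : ℂ)) * f x
    - ((‖A x‖ ^ 2 : ℝ) : ℂ) * f x

/-- Newtonian potential `(-Δ)⁻¹ f = (4π|x|)⁻¹ * f` on `ℝ³`. -/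
def newton (f : E3 → ℝ) (x : E3) : ℝ := ∫ y, (4 * π * ‖x - y‖)⁻¹ * f y

/-- Newtonian potential of a complex density. -/
def newtonC (f : E3 → ℂ) (x : E3) : ℂ := ∫ y, ((4 * π * ‖x - y‖)⁻¹ : ℝ) * f y

/-- The Bessel potential `(1-Δ)^{s/2} u`, defined via the Fourier transform. -/
def bessel (s : ℝ) (u : E3 → ℂ) : E3 → ℂ :=
  FourierTransformInv.fourierInv
    (fun ξ => (((1 + ‖ξ‖ ^ 2) ^ (s / 2) : ℝ) : ℂ) * FourierTransform.fourier u ξ)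

/-- The Bessel-potential Sobolev norm `‖u‖_{H^s_p}`. -/
def HsNorm (s : ℝ) (p : ℝ≥0∞) (u : E3 → ℂ) : ℝ≥0∞ := eLpNorm (bessel s u) p volume

/-- The `L²`-based Sobolev norm `‖u‖_{H^s}`. -/
def Hs (s : ℝ) (u : E3 → ℂ) : ℝ≥0∞ := HsNorm s 2 u

/-- The Sobolev norm of a real vector field (componentwise). -/
def HsVec (s : ℝ) (A : E3 → E3) : ℝ≥0∞ := ∑ i, Hs s (fun x => ((A x i : ℝ) : ℂ))

/-- Homogeneous `Ḣ¹` norm of a vector field. -/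
def Hdot1 (A : E3 → E3) : ℝ≥0∞ := eLpNorm (fun x => fderiv ℝ A x) 2 volume

/-- Helmholtz (Leray) projection, acting componentwise via the Fourier multiplier
`δ_{jk} - ξ_j ξ_k / |ξ|²`. -/
def helmholtz (F : Fin 3 → E3 → ℂ) (j : Fin 3) : E3 → ℂ :=
  FourierTransformInv.fourierInv (fun ξ =>
    ∑ k, ((((if j = k then (1:ℝ) else 0) - ξ j * ξ k / ‖ξ‖ ^ 2) : ℝ) : ℂ)
      * FourierTransform.fourier (F k) ξ)

/-- The current density `J(u,A) = 2 Im (ū ∇_A u)`, componentwise. -/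
def currentJ (u : E3 → ℂ) (A : E3 → E3) (i : Fin 3) (x : E3) : ℝ :=
  2 * ((starRingEnd ℂ) (u x) * (pd i u x - Complex.I * (A x i : ℂ) * u x)).im

end

noncomputable section Aux

variable {E F : Type*} [NormedAddCommGroup E] [NormedSpace ℝ E]
  [NormedAddCommGroup F] [NormedSpace ℝ F]

/-- Derivative along an affine line. -/
lemma hasDerivAt_line {f : E → F} {x : E} {v : E} {s₀ : ℝ}
    (hf : DifferentiableAt ℝ f (x + s₀ • v)) :
    HasDerivAt (fun s : ℝ => f (x + s • v)) (fderiv ℝ f (x + s₀ • v) v) s₀ := by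
  have h1 : HasDerivAt (fun s : ℝ => x + s • v) v s₀ := by
    simpa using ((hasDerivAt_id s₀).smul_const v).const_add x
  exact hf.hasFDerivAt.comp_hasDerivAt s₀ h1

lemma contDiff_fderiv_apply {G : E → F} (hG : ContDiff ℝ (⊤ : ℕ∞) G) (v : E) :
    ContDiff ℝ (⊤ : ℕ∞) (fun y => fderiv ℝ G y v) :=
  (hG.fderiv_right (by simp)).clm_apply contDiff_const

lemma fderiv_fderiv_comm {G : E → F} (hG : ContDiff ℝ (⊤ : ℕ∞) G) (v w : E) (z : E) :
    fderiv ℝ (fun y => fderiv ℝ G y v) z w = fderiv ℝ (fun y => fderiv ℝ G y w) z v := by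
  have hd : ∀ y, HasFDerivAt G (fderiv ℝ G y) y := fun y =>
    (hG.differentiable (by simp) y).hasFDerivAt
  have h2 : HasFDerivAt (fderiv ℝ G) (fderiv ℝ (fderiv ℝ G) z) z :=
    (((hG.fderiv_right (m := (⊤ : ℕ∞)) (by simp)).differentiable (by simp)) z).hasFDerivAt
  have sym := second_derivative_symmetric hd h2
  have e1 : ∀ u : E, fderiv ℝ (fun y => fderiv ℝ G y u) z
      = (fderiv ℝ (fderiv ℝ G) z).flip u := by
    intro u
    have := fderiv_clm_apply (𝕜 := ℝ)
      (c := fderiv ℝ G) (u := fun _ => u) (x := z)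
      (((hG.fderiv_right (m := (⊤ : ℕ∞)) (by simp)).differentiable (by simp)) z) (differentiableAt_const u)
    simpa using this
  rw [e1, e1]
  simpa using sym w v

lemma clm_apply_eq_sum {n : ℕ} (ℓ : (Fin n → ℝ) →L[ℝ] F) (v : Fin n → ℝ) :
    ℓ v = ∑ j, v j • ℓ (Pi.single j 1) := by
  have hv : v = ∑ j, v j • (Pi.single j 1 : Fin n → ℝ) := by
    funext k
    simp [Finset.sum_apply, Pi.single_apply]
  conv_lhs => rw [hv]
  simp [map_sum]

end Aux


noncomputable section Wave

abbrev R4 := Fin 4 → ℝ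

def pdn (j : Fin 4) (G : R4 → ℝ) (z : R4) : ℝ := fderiv ℝ G z (Pi.single j 1)

lemma ContDiff.pdnCD {G : R4 → ℝ} (hG : ContDiff ℝ (⊤ : ℕ∞) G) (j : Fin 4) :
    ContDiff ℝ (⊤ : ℕ∞) (pdn j G) := by
  unfold pdn
  exact (hG.fderiv_right (by simp)).clm_apply contDiff_const

-- basic calculus for pdn
lemma pdn_mul {f g : R4 → ℝ} {z : R4} (hf : DifferentiableAt ℝ f z)
    (hg : DifferentiableAt ℝ g z) (j : Fin 4) :
    pdn j (fun y => f y * g y) z = f z * pdn j g z + pdn j f z * g z := by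
  have h := (hf.hasFDerivAt.mul' hg.hasFDerivAt).fderiv
  simp only [pdn]
  rw [show (fun y => f y * g y) = f * g from rfl, h]
  simp [mul_comm]

lemma pdn_add {f g : R4 → ℝ} {z : R4} (hf : DifferentiableAt ℝ f z)
    (hg : DifferentiableAt ℝ g z) (j : Fin 4) :
    pdn j (fun y => f y + g y) z = pdn j f z + pdn j g z := by
  simp [pdn, fderiv_fun_add hf hg]

lemma pdn_sum {ι : Type*} (s : Finset ι) {f : ι → R4 → ℝ} {z : R4}
    (hf : ∀ i ∈ s, DifferentiableAt ℝ (f i) z) (j : Fin 4) :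
    pdn j (fun y => ∑ i ∈ s, f i y) z = ∑ i ∈ s, pdn j (f i) z := by
  unfold pdn
  rw [fderiv_fun_sum hf]
  simp

lemma pdn_sq {f : R4 → ℝ} {z : R4} (hf : DifferentiableAt ℝ f z) (j : Fin 4) :
    pdn j (fun y => f y ^ 2) z = 2 * f z * pdn j f z := by
  have := pdn_mul hf hf j
  simp only [← sq] at this
  rw [this]; ring

lemma pdn_neg {f : R4 → ℝ} {z : R4} (j : Fin 4) :
    pdn j (fun y => -(f y)) z = -(pdn j f z) := by
  simp [pdn, fderiv_neg]

lemma pdn_const_mul {f : R4 → ℝ} {z : R4} (hf : DifferentiableAt ℝ f z) (c : ℝ) (j : Fin 4) :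
    pdn j (fun y => c * f y) z = c * pdn j f z := by
  simp [pdn, fderiv_const_mul hf c]

-- the coordinate functions
lemma pdn_lam (R : ℝ) (z : R4) : pdn 0 (fun y => R - y 0) z = -1 := by
  have hp : HasFDerivAt (fun y : R4 => y 0)
      (ContinuousLinearMap.proj (R := ℝ) (φ := fun _ : Fin 4 => ℝ) 0) z := by
    exact (ContinuousLinearMap.proj (R := ℝ) (φ := fun _ : Fin 4 => ℝ) 0).hasFDerivAt
  have h : HasFDerivAt (fun y : R4 => R - y 0)
      ((0 : R4 →L[ℝ] ℝ) - ContinuousLinearMap.proj 0) z :=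
    (hasFDerivAt_const R z).sub hp
  simp [pdn, h.fderiv]

lemma pdn_lam_succ (R : ℝ) (z : R4) (j : Fin 3) : pdn j.succ (fun y => R - y 0) z = 0 := by
  have hp : HasFDerivAt (fun y : R4 => y 0)
      (ContinuousLinearMap.proj (R := ℝ) (φ := fun _ : Fin 4 => ℝ) 0) z := by
    exact (ContinuousLinearMap.proj (R := ℝ) (φ := fun _ : Fin 4 => ℝ) 0).hasFDerivAt
  have h : HasFDerivAt (fun y : R4 => R - y 0)
      ((0 : R4 →L[ℝ] ℝ) - ContinuousLinearMap.proj 0) z :=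
    (hasFDerivAt_const R z).sub hp
  simp [pdn, h.fderiv, Pi.single_apply, Fin.succ_ne_zero]

lemma diff_lam (R : ℝ) (z : R4) : DifferentiableAt ℝ (fun y : R4 => R - y 0) z := by
  have hp : HasFDerivAt (fun y : R4 => y 0)
      (ContinuousLinearMap.proj (R := ℝ) (φ := fun _ : Fin 4 => ℝ) 0) z := by
    exact (ContinuousLinearMap.proj (R := ℝ) (φ := fun _ : Fin 4 => ℝ) 0).hasFDerivAt
  exact ((hasFDerivAt_const R z).sub hp).differentiableAt

lemma pdn_coord (k : Fin 4) (z : R4) (j : Fin 4) :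
    pdn j (fun y : R4 => y k) z = if k = j then 1 else 0 := by
  have h : HasFDerivAt (fun y : R4 => y k)
      (ContinuousLinearMap.proj (R := ℝ) (φ := fun _ : Fin 4 => ℝ) k) z := by
    exact (ContinuousLinearMap.proj (R := ℝ) (φ := fun _ : Fin 4 => ℝ) k).hasFDerivAt
  simp [pdn, h.fderiv, Pi.single_apply]

/-- Scaling map straightening the truncated cone to a box. -/
def Phi (R : ℝ) (x₀ : Fin 3 → ℝ) (z : R4) : R4 :=
  Fin.cons (z 0) (fun i => x₀ i + (R - z 0) * z i.succ)

lemma Phi_zero (R : ℝ) (x₀ : Fin 3 → ℝ) (z : R4) : Phi R x₀ z 0 = z 0 := rfl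

lemma contDiff_Phi (R : ℝ) (x₀ : Fin 3 → ℝ) : ContDiff ℝ (⊤ : ℕ∞) (Phi R x₀) := by
  apply contDiff_pi.2
  intro j
  refine Fin.cases ?_ ?_ j
  · exact (ContinuousLinearMap.proj (R := ℝ) (φ := fun _ : Fin 4 => ℝ) 0).contDiff
  · intro i
    simp only [Phi, Fin.cons_succ]
    exact contDiff_const.add (((contDiff_const).sub
        (ContinuousLinearMap.proj (R := ℝ) (φ := fun _ : Fin 4 => ℝ) 0).contDiff).mul
      (ContinuousLinearMap.proj (R := ℝ) (φ := fun _ : Fin 4 => ℝ) i.succ).contDiff)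

/-- Derivative of `Phi`. -/
def Mder (R : ℝ) (z : R4) : R4 →L[ℝ] R4 :=
  ContinuousLinearMap.pi (Fin.cons (ContinuousLinearMap.proj 0)
    (fun i => (R - z 0) • ContinuousLinearMap.proj i.succ - z i.succ • ContinuousLinearMap.proj 0))

lemma hasFDerivAt_Phi (R : ℝ) (x₀ : Fin 3 → ℝ) (z : R4) :
    HasFDerivAt (Phi R x₀) (Mder R z) z := by
  apply hasFDerivAt_pi''
  intro j
  rw [Mder, ContinuousLinearMap.proj_pi]
  refine Fin.cases ?_ ?_ j
  · exact (ContinuousLinearMap.proj (R := ℝ) (φ := fun _ : Fin 4 => ℝ) 0).hasFDerivAt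
  · intro i
    simp only [Phi, Fin.cons_succ]
    have h := (((hasFDerivAt_const R z).sub
        (ContinuousLinearMap.proj (R := ℝ) (φ := fun _ : Fin 4 => ℝ) 0).hasFDerivAt).mul'
      (ContinuousLinearMap.proj (R := ℝ) (φ := fun _ : Fin 4 => ℝ) i.succ).hasFDerivAt).const_add
      (x₀ i)
    convert h using 1
    all_goals
      ext v
      simp [ContinuousLinearMap.smulRight_apply] <;> ring

lemma Mder_single_zero (R : ℝ) (z : R4) :
    Mder R z (Pi.single 0 1) = Fin.cons 1 (fun i => -(z i.succ)) := by
  funext k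
  refine Fin.cases ?_ ?_ k <;>
    simp [Mder, Pi.single_apply, Fin.succ_ne_zero]

lemma Mder_single_succ (R : ℝ) (z : R4) (j : Fin 3) :
    Mder R z (Pi.single j.succ 1) = (R - z 0) • (Pi.single j.succ 1 : R4) := by
  funext k
  refine Fin.cases ?_ ?_ k <;>
    simp [Mder, Pi.single_apply, (Fin.succ_ne_zero _).symm, Fin.succ_inj, eq_comm]

lemma pdn_comp_zero {g : R4 → ℝ} (hg : ContDiff ℝ (⊤ : ℕ∞) g) (R : ℝ) (x₀ : Fin 3 → ℝ) (z : R4) :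
    pdn 0 (fun y => g (Phi R x₀ y)) z
      = pdn 0 g (Phi R x₀ z) - ∑ i : Fin 3, z i.succ * pdn i.succ g (Phi R x₀ z) := by
  have hc : HasFDerivAt (fun y => g (Phi R x₀ y))
      ((fderiv ℝ g (Phi R x₀ z)).comp (Mder R z)) z :=
    (hg.differentiable (by simp) _).hasFDerivAt.comp z (hasFDerivAt_Phi R x₀ z)
  rw [pdn, hc.fderiv, ContinuousLinearMap.comp_apply, Mder_single_zero,
    clm_apply_eq_sum (fderiv ℝ g (Phi R x₀ z)) (Fin.cons 1 fun i => -(z i.succ)),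
    Fin.sum_univ_succ]
  rw [sub_eq_add_neg, ← Finset.sum_neg_distrib]
  simp [pdn, neg_mul]

lemma pdn_comp_succ {g : R4 → ℝ} (hg : ContDiff ℝ (⊤ : ℕ∞) g) (R : ℝ) (x₀ : Fin 3 → ℝ) (z : R4)
    (j : Fin 3) :
    pdn j.succ (fun y => g (Phi R x₀ y)) z = (R - z 0) * pdn j.succ g (Phi R x₀ z) := by
  have hc : HasFDerivAt (fun y => g (Phi R x₀ y))
      ((fderiv ℝ g (Phi R x₀ z)).comp (Mder R z)) z :=
    (hg.differentiable (by simp) _).hasFDerivAt.comp z (hasFDerivAt_Phi R x₀ z)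
  rw [pdn, hc.fderiv, ContinuousLinearMap.comp_apply, Mder_single_succ, ContinuousLinearMap.map_smul]
  simp [pdn]

end Wave
noncomputable section WaveB
variable {W : R4 → ℝ}

lemma pdn_cube {f : R4 → ℝ} {z : R4} (hf : DifferentiableAt ℝ f z) (j : Fin 4) :
    pdn j (fun y => f y ^ 3) z = 3 * f z ^ 2 * pdn j f z := by
  have he : (fun y => f y ^ 3) = fun y => f y ^ 2 * f y := by
    funext y; ring
  rw [he, pdn_mul (hf.fun_pow 2) hf, pdn_sq hf]
  ring

/-- Energy density. -/
def eD (W : R4 → ℝ) (p : R4) : ℝ := pdn 0 W p ^ 2 + ∑ i : Fin 3, pdn i.succ W p ^ 2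

/-- Momentum density. -/
def Pm (W : R4 → ℝ) (j : Fin 3) (p : R4) : ℝ := -(2 * pdn 0 W p * pdn j.succ W p)

lemma eD_nonneg (W : R4 → ℝ) (p : R4) : 0 ≤ eD W p := by
  have : (0:ℝ) ≤ ∑ i : Fin 3, pdn i.succ W p ^ 2 :=
    Finset.sum_nonneg fun i _ => sq_nonneg _
  have h0 := sq_nonneg (pdn 0 W p)
  unfold eD; linarith

lemma eD_cd (hW : ContDiff ℝ (⊤ : ℕ∞) W) : ContDiff ℝ (⊤ : ℕ∞) (eD W) := by
  unfold eD
  exact ((hW.pdnCD 0).pow 2).add (ContDiff.sum fun i _ => (hW.pdnCD i.succ).pow 2)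

lemma Pm_cd (hW : ContDiff ℝ (⊤ : ℕ∞) W) (j : Fin 3) : ContDiff ℝ (⊤ : ℕ∞) (Pm W j) := by
  unfold Pm
  exact (((contDiff_const.mul (hW.pdnCD 0)).mul (hW.pdnCD j.succ))).neg

lemma abs_Pm_le (W : R4 → ℝ) (j : Fin 3) (p : R4) : |Pm W j p| ≤ eD W p := by
  have h1 : pdn j.succ W p ^ 2 ≤ ∑ i : Fin 3, pdn i.succ W p ^ 2 :=
    Finset.single_le_sum (f := fun i => pdn i.succ W p ^ 2)
      (fun i _ => sq_nonneg _) (Finset.mem_univ j)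
  have h2 : |Pm W j p| = 2 * |pdn 0 W p| * |pdn j.succ W p| := by
    unfold Pm
    rw [abs_neg, abs_mul, abs_mul]
    simp [abs_of_nonneg]
  have h3 := sq_nonneg (|pdn 0 W p| - |pdn j.succ W p|)
  have h4 : pdn 0 W p ^ 2 = |pdn 0 W p| ^ 2 := (_root_.sq_abs _).symm
  have h5 : pdn j.succ W p ^ 2 = |pdn j.succ W p| ^ 2 := (_root_.sq_abs _).symm
  unfold eD
  nlinarith [h1, h3]

/-- Energy–momentum divergence identity. -/
lemma energy_div (hW : ContDiff ℝ (⊤ : ℕ∞) W) (p : R4) :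
    pdn 0 (eD W) p + ∑ j : Fin 3, pdn j.succ (Pm W j) p
      = 2 * pdn 0 W p * (pdn 0 (pdn 0 W) p - ∑ i : Fin 3, pdn i.succ (pdn i.succ W) p) := by
  have hd : ∀ a : Fin 4, DifferentiableAt ℝ (pdn a W) p :=
    fun a => ((hW.pdnCD a).differentiable (by simp)) p
  have h1 : pdn 0 (eD W) p = 2 * pdn 0 W p * pdn 0 (pdn 0 W) p
      + ∑ i : Fin 3, 2 * pdn i.succ W p * pdn 0 (pdn i.succ W) p := by
    unfold eD
    rw [pdn_add ((hd 0).fun_pow 2) (DifferentiableAt.fun_sum fun i _ => (hd i.succ).fun_pow 2),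
      pdn_sq (hd 0), pdn_sum Finset.univ (fun i _ => (hd i.succ).fun_pow 2)]
    congr 1
    exact Finset.sum_congr rfl fun i _ => pdn_sq (hd i.succ) 0
  have h2 : ∀ j : Fin 3, pdn j.succ (Pm W j) p
      = -(2 * pdn j.succ (pdn 0 W) p * pdn j.succ W p
          + 2 * pdn 0 W p * pdn j.succ (pdn j.succ W) p) := by
    intro j
    unfold Pm
    rw [pdn_neg (f := fun y => 2 * pdn 0 W y * pdn j.succ W y),
      pdn_mul ((differentiableAt_const 2).fun_mul (hd 0)) (hd j.succ),
      pdn_const_mul (hd 0)]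
    ring
  have h3 : ∀ j : Fin 3, pdn j.succ (pdn 0 W) p = pdn 0 (pdn j.succ W) p :=
    fun j => fderiv_fderiv_comm hW _ _ p
  have h2' : ∀ j : Fin 3, pdn j.succ (Pm W j) p
      = -(2 * pdn j.succ W p * pdn 0 (pdn j.succ W) p
          + 2 * pdn 0 W p * pdn j.succ (pdn j.succ W) p) := by
    intro j
    rw [h2 j, h3 j]
    ring
  rw [h1, Finset.sum_congr rfl fun j _ => h2' j]
  simp only [neg_add, Finset.sum_add_distrib, Finset.sum_neg_distrib, mul_sub, Finset.mul_sum]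
  ring_nf

end WaveB
noncomputable section WaveC
variable {W : R4 → ℝ}

lemma contDiff_coord (k : Fin 4) : ContDiff ℝ (⊤ : ℕ∞) (fun y : R4 => y k) := by
  exact (ContinuousLinearMap.proj (R := ℝ) (φ := fun _ : Fin 4 => ℝ) k).contDiff

lemma contDiff_lam (R : ℝ) : ContDiff ℝ (⊤ : ℕ∞) (fun y : R4 => R - y 0) :=
  contDiff_const.sub (contDiff_coord 0)

/-- The Piola-transformed energy-momentum field on the straightened cone. -/
def Vf (W : R4 → ℝ) (R : ℝ) (x₀ : Fin 3 → ℝ) : Fin 4 → R4 → ℝ :=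
  Fin.cons (fun z => (R - z 0) ^ 3 * eD W (Phi R x₀ z))
    (fun j z => (R - z 0) ^ 2 *
      (z j.succ * eD W (Phi R x₀ z) + Pm W j (Phi R x₀ z)))

lemma Vf_cd (hW : ContDiff ℝ (⊤ : ℕ∞) W) (R : ℝ) (x₀ : Fin 3 → ℝ) (j : Fin 4) :
    ContDiff ℝ (⊤ : ℕ∞) (Vf W R x₀ j) := by
  refine Fin.cases ?_ ?_ j
  · exact ((contDiff_lam R).pow 3).mul ((eD_cd hW).comp (contDiff_Phi R x₀))
  · intro i
    exact ((contDiff_lam R).pow 2).mul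
      (((contDiff_coord i.succ).mul ((eD_cd hW).comp (contDiff_Phi R x₀))).add
        ((Pm_cd hW i).comp (contDiff_Phi R x₀)))

lemma div_Vf (hW : ContDiff ℝ (⊤ : ℕ∞) W) (R : ℝ) (x₀ : Fin 3 → ℝ) (z : R4) :
    ∑ j : Fin 4, pdn j (Vf W R x₀ j) z
      = (R - z 0) ^ 3 * (2 * pdn 0 W (Phi R x₀ z)
          * (pdn 0 (pdn 0 W) (Phi R x₀ z)
             - ∑ i : Fin 3, pdn i.succ (pdn i.succ W) (Phi R x₀ z))) := by
  have hde : DifferentiableAt ℝ (fun y => eD W (Phi R x₀ y)) z :=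
    (((eD_cd hW).comp (contDiff_Phi R x₀)).differentiable (by simp)) z
  have hdP : ∀ j : Fin 3, DifferentiableAt ℝ (fun y => Pm W j (Phi R x₀ y)) z :=
    fun j => (((Pm_cd hW j).comp (contDiff_Phi R x₀)).differentiable (by simp)) z
  have hdlam : DifferentiableAt ℝ (fun y : R4 => R - y 0) z :=
    ((contDiff_lam R).differentiable (by simp)) z
  have hdc : ∀ k : Fin 4, DifferentiableAt ℝ (fun y : R4 => y k) z :=
    fun k => ((contDiff_coord k).differentiable (by simp)) z
  have h0 : pdn 0 (Vf W R x₀ 0) z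
      = (R - z 0) ^ 3 * (pdn 0 (eD W) (Phi R x₀ z)
          - ∑ i : Fin 3, z i.succ * pdn i.succ (eD W) (Phi R x₀ z))
        + (3 * (R - z 0) ^ 2 * (-1)) * eD W (Phi R x₀ z) := by
    show pdn 0 (fun y => (R - y 0) ^ 3 * eD W (Phi R x₀ y)) z = _
    rw [pdn_mul (hdlam.fun_pow 3) hde 0, pdn_cube hdlam 0, pdn_lam R z,
      pdn_comp_zero (eD_cd hW) R x₀ z]
  have hsucc : ∀ j : Fin 3, pdn j.succ (Vf W R x₀ j.succ) z
      = (R - z 0) ^ 2 * eD W (Phi R x₀ z)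
        + (R - z 0) ^ 3 * (z j.succ * pdn j.succ (eD W) (Phi R x₀ z))
        + (R - z 0) ^ 3 * pdn j.succ (Pm W j) (Phi R x₀ z) := by
    intro j
    show pdn j.succ (fun y => (R - y 0) ^ 2 *
        (y j.succ * eD W (Phi R x₀ y) + Pm W j (Phi R x₀ y))) z = _
    rw [pdn_mul (hdlam.fun_pow 2) (((hdc j.succ).fun_mul hde).fun_add (hdP j)) j.succ,
      pdn_sq hdlam j.succ, pdn_lam_succ R z j,
      pdn_add ((hdc j.succ).fun_mul hde) (hdP j) j.succ,
      pdn_mul (hdc j.succ) hde j.succ,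
      pdn_coord j.succ z j.succ,
      pdn_comp_succ (eD_cd hW) R x₀ z j,
      pdn_comp_succ (Pm_cd hW j) R x₀ z j]
    rw [if_pos rfl]
    ring
  rw [Fin.sum_univ_succ, h0, Finset.sum_congr rfl fun j _ => hsucc j]
  simp only [Finset.sum_add_distrib, Finset.sum_const, Finset.card_univ, Fintype.card_fin,
    nsmul_eq_mul, ← Finset.mul_sum]
  have hed := energy_div hW (Phi R x₀ z)
  linear_combination ((R - z 0) ^ 3) * hed

end WaveC
noncomputable section WaveD

lemma integral_zero_on_box {n : ℕ} {g : (Fin n → ℝ) → ℝ} (hg : Continuous g)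
    (hnn : ∀ x, 0 ≤ g x) {a b : Fin n → ℝ}
    (hI : ∫ x in Set.Icc a b, g x = 0) {x : Fin n → ℝ}
    (hx : x ∈ Set.pi Set.univ fun j => Set.Ioo (a j) (b j)) : g x = 0 := by
  by_contra hne
  have hpos : 0 < g x := lt_of_le_of_ne (hnn x) (Ne.symm hne)
  set U := {y | 0 < g y} ∩ Set.pi Set.univ (fun j => Set.Ioo (a j) (b j)) with hU
  have hUopen : IsOpen U :=
    (isOpen_lt continuous_const hg).inter
      (isOpen_set_pi Set.finite_univ fun j _ => isOpen_Ioo)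
  have hvol : 0 < volume U := hUopen.measure_pos volume ⟨x, hpos, hx⟩
  have hsub : U ⊆ Function.support g ∩ Set.Icc a b := by
    rintro y ⟨hy1, hy2⟩
    refine ⟨ne_of_gt hy1, ?_⟩
    rw [← Set.pi_univ_Icc]
    exact Set.pi_mono (fun j _ => Set.Ioo_subset_Icc_self) hy2
  have hint : IntegrableOn g (Set.Icc a b) :=
    hg.continuousOn.integrableOn_compact isCompact_Icc
  have hlt : 0 < ∫ y in Set.Icc a b, g y :=
    (setIntegral_pos_iff_support_of_nonneg_ae (ae_of_all _ hnn) hint).2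
      (lt_of_lt_of_le hvol (measure_mono hsub))
  rw [hI] at hlt
  exact lt_irrefl 0 hlt

lemma wave_zero (T : ℝ) (hT : 0 < T) {W : R4 → ℝ} (hW : ContDiff ℝ (⊤ : ℕ∞) W)
    (heq : ∀ z : R4, z 0 ∈ Set.Ioo 0 T →
      pdn 0 (pdn 0 W) z = ∑ i : Fin 3, pdn i.succ (pdn i.succ W) z)
    (h0 : ∀ z : R4, z 0 = 0 → W z = 0)
    (h1 : ∀ z : R4, z 0 = 0 → pdn 0 W z = 0) :
    ∀ z : R4, z 0 ∈ Set.Icc 0 T → W z = 0 := by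
  -- energy vanishes at time 0
  have heD0 : ∀ z : R4, z 0 = 0 → eD W z = 0 := by
    intro z hz
    have hsp : ∀ i : Fin 3, pdn i.succ W z = 0 := by
      intro i
      have hdiff : DifferentiableAt ℝ W (z + (0:ℝ) • (Pi.single i.succ 1 : R4)) :=
        (hW.differentiable (by simp)) _
      have hline := hasDerivAt_line (f := W) (x := z) (v := (Pi.single i.succ 1 : R4))
        (s₀ := 0) hdiff
      have hfun : (fun s : ℝ => W (z + s • (Pi.single i.succ 1 : R4))) = fun _ => (0:ℝ) := by
        funext s
        refine h0 _ ?_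
        have hcoord : (z + s • (Pi.single i.succ 1 : R4)) 0 = z 0 := by
          simp [Pi.single_apply, Ne.symm (Fin.succ_ne_zero i)]
        rw [hcoord, hz]
      rw [hfun] at hline
      have := hline.unique (hasDerivAt_const 0 0)
      simpa [pdn] using this
    have h00 := h1 z hz
    simp [eD, h00, hsp]
  -- main energy estimate: the energy vanishes on (0,T]
  have key : ∀ z : R4, z 0 ∈ Set.Ioc 0 T → eD W z = 0 := by
    intro z hz
    set t₁ := z 0 with ht₁
    set x₀ : Fin 3 → ℝ := fun i => z i.succ with hx₀
    set R : ℝ := t₁ + 1 with hR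
    set a : R4 := Fin.cons 0 (fun _ => -1) with ha
    set b : R4 := Fin.cons t₁ (fun _ => 1) with hb
    have ha0 : a 0 = 0 := rfl
    have hb0 : b 0 = t₁ := rfl
    have hasucc : ∀ i : Fin 3, a i.succ = -1 := fun i => rfl
    have hbsucc : ∀ i : Fin 3, b i.succ = 1 := fun i => rfl
    have hab : a ≤ b := by
      intro j
      refine Fin.cases ?_ (fun i => ?_) j
      · rw [ha0, hb0]; exact hz.1.le
      · rw [hasucc, hbsucc]; norm_num
    have hVcd := fun j => Vf_cd hW R x₀ j
    have hdivcont : Continuous fun x => ∑ j : Fin 4, pdn j (Vf W R x₀ j) x :=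
      continuous_finset_sum _ fun j _ => ((hVcd j).pdnCD j).continuous
    have hdiv := MeasureTheory.integral_divergence_of_hasFDerivAt_off_countable'
      a b hab (Vf W R x₀) (fun j y => fderiv ℝ (Vf W R x₀ j) y) ∅ Set.countable_empty
      (fun i => (hVcd i).continuous.continuousOn)
      (fun x _ i => (((hVcd i).differentiable (by simp)) x).hasFDerivAt)
      ((hdivcont.continuousOn).integrableOn_compact isCompact_Icc)
    -- the left side vanishes
    have hae : (Set.pi Set.univ fun i => Set.Ioo (a i) (b i)) =ᵐ[volume] Set.Icc a b := by
      rw [MeasureTheory.volume_pi]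
      exact MeasureTheory.Measure.univ_pi_Ioo_ae_eq_Icc
    have hLHS : (∫ x in Set.Icc a b,
        ∑ i : Fin 4, fderiv ℝ (Vf W R x₀ i) x (Pi.single i 1)) = 0 := by
      rw [← setIntegral_congr_set hae]
      rw [setIntegral_congr_fun (MeasurableSet.univ_pi fun i => measurableSet_Ioo)
        (g := fun _ => (0:ℝ)) ?_]
      · simp
      · intro x hx
        have hx0 : x 0 ∈ Set.Ioo (0:ℝ) t₁ := by
          have := hx 0 (Set.mem_univ 0)
          simpa [ha, hb] using this
        have hxT : (Phi R x₀ x) 0 ∈ Set.Ioo (0:ℝ) T :=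
          ⟨hx0.1, lt_of_lt_of_le hx0.2 hz.2⟩
        show ∑ j : Fin 4, pdn j (Vf W R x₀ j) x = 0
        rw [div_Vf hW R x₀ x, heq _ hxT, sub_self, mul_zero, mul_zero]
    -- name the face integrals
    let Ff : Fin 4 → ℝ := fun i => ∫ x in Set.Icc (a ∘ i.succAbove) (b ∘ i.succAbove),
      Vf W R x₀ i (i.insertNth (b i) x)
    let Bf : Fin 4 → ℝ := fun i => ∫ x in Set.Icc (a ∘ i.succAbove) (b ∘ i.succAbove),
      Vf W R x₀ i (i.insertNth (a i) x)
    have hdiv' : (0:ℝ) = ∑ i : Fin 4, (Ff i - Bf i) := by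
      rw [← hLHS]
      exact hdiv
    have hsplit : ∑ i : Fin 4, (Ff i - Bf i)
        = (Ff 0 - Bf 0) + ∑ j : Fin 3, (Ff j.succ - Bf j.succ) := Fin.sum_univ_succ _
    -- top face integrand
    have htopint : ∀ x : Fin 3 → ℝ,
        Vf W R x₀ 0 ((0 : Fin 4).insertNth (b 0) x) = eD W (Phi R x₀ (Fin.cons t₁ x)) := by
      intro x
      rw [Fin.insertNth_zero', hb0]
      show (R - (Fin.cons t₁ x : R4) 0) ^ 3 * eD W (Phi R x₀ (Fin.cons t₁ x)) = _
      rw [show (Fin.cons t₁ x : R4) 0 = t₁ from rfl, hR]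
      ring_nf
    -- bottom face vanishes
    have hbot : Bf 0 = 0 := by
      show (∫ x in Set.Icc (a ∘ (0 : Fin 4).succAbove) (b ∘ (0 : Fin 4).succAbove),
        Vf W R x₀ 0 ((0 : Fin 4).insertNth (a 0) x)) = 0
      rw [setIntegral_congr_fun measurableSet_Icc (g := fun _ => (0:ℝ))]
      · simp
      · intro x _
        show Vf W R x₀ 0 (Fin.insertNth 0 (a 0) x) = (0:ℝ)
        rw [Fin.insertNth_zero', ha0]
        show (R - (Fin.cons (0:ℝ) x : R4) 0) ^ 3 * eD W (Phi R x₀ (Fin.cons 0 x)) = 0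
        rw [heD0 (Phi R x₀ (Fin.cons 0 x)) rfl, mul_zero]
    -- spatial faces: front nonneg, back nonpos
    have hfront : ∀ j : Fin 3, 0 ≤ Ff j.succ := by
      intro j
      show 0 ≤ ∫ x in Set.Icc (a ∘ (j.succ : Fin 4).succAbove) (b ∘ (j.succ : Fin 4).succAbove),
        Vf W R x₀ j.succ ((j.succ : Fin 4).insertNth (b j.succ) x)
      refine setIntegral_nonneg measurableSet_Icc fun x hx => ?_
      set w : R4 := Fin.insertNth j.succ (b j.succ) x with hw
      have hsA0 : (j.succ : Fin 4).succAbove 0 = 0 := by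
        rw [Fin.succAbove_of_castSucc_lt] <;> simp
      have hw0 : w 0 = x 0 := by
        rw [hw, ← hsA0, Fin.insertNth_apply_succAbove]
      have hwj : w j.succ = 1 := by rw [hw, Fin.insertNth_apply_same, hbsucc]
      have hx0 : x 0 ∈ Set.Icc (0:ℝ) t₁ := by
        have h1' := hx.1 0
        have h2' := hx.2 0
        constructor
        · simpa [ha, hsA0] using h1'
        · simpa [hb, hsA0] using h2'
      have hlam : (0:ℝ) ≤ R - w 0 := by
        rw [hw0, hR]; linarith [hx0.2]
      show 0 ≤ (R - w 0) ^ 2 * (w j.succ * eD W (Phi R x₀ w) + Pm W j (Phi R x₀ w))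
      have hPm := abs_Pm_le W j (Phi R x₀ w)
      have hin : 0 ≤ w j.succ * eD W (Phi R x₀ w) + Pm W j (Phi R x₀ w) := by
        rw [hwj, one_mul]
        have habs := abs_le.1 hPm
        linarith [habs.1]
      positivity
    have hback : ∀ j : Fin 3, Bf j.succ ≤ 0 := by
      intro j
      show (∫ x in Set.Icc (a ∘ (j.succ : Fin 4).succAbove) (b ∘ (j.succ : Fin 4).succAbove),
        Vf W R x₀ j.succ ((j.succ : Fin 4).insertNth (a j.succ) x)) ≤ 0
      refine setIntegral_nonpos measurableSet_Icc fun x hx => ?_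
      set w : R4 := Fin.insertNth j.succ (a j.succ) x with hw
      have hsA0 : (j.succ : Fin 4).succAbove 0 = 0 := by
        rw [Fin.succAbove_of_castSucc_lt] <;> simp
      have hw0 : w 0 = x 0 := by
        rw [hw, ← hsA0, Fin.insertNth_apply_succAbove]
      have hwj : w j.succ = -1 := by rw [hw, Fin.insertNth_apply_same, hasucc]
      show (R - w 0) ^ 2 * (w j.succ * eD W (Phi R x₀ w) + Pm W j (Phi R x₀ w)) ≤ 0
      have hPm := abs_Pm_le W j (Phi R x₀ w)
      have hneg : w j.succ * eD W (Phi R x₀ w) + Pm W j (Phi R x₀ w) ≤ 0 := by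
        rw [hwj, neg_one_mul]
        have habs := abs_le.1 hPm
        linarith [habs.2]
      exact mul_nonpos_of_nonneg_of_nonpos (sq_nonneg _) hneg
    -- from the identity, the top integral vanishes
    have hFtopnn : 0 ≤ Ff 0 := by
      show 0 ≤ ∫ x in Set.Icc (a ∘ (0 : Fin 4).succAbove) (b ∘ (0 : Fin 4).succAbove),
        Vf W R x₀ 0 ((0 : Fin 4).insertNth (b 0) x)
      refine setIntegral_nonneg measurableSet_Icc fun x _ => ?_
      show 0 ≤ Vf W R x₀ 0 ((0 : Fin 4).insertNth (b 0) x)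
      rw [htopint x]
      exact eD_nonneg W _
    have htopz : Ff 0 = 0 := by
      rw [hsplit] at hdiv'
      have hS : 0 ≤ ∑ j : Fin 3, (Ff j.succ - Bf j.succ) :=
        Finset.sum_nonneg fun j _ => by linarith [hfront j, hback j]
      rw [hbot, sub_zero] at hdiv'
      linarith
    -- hence the energy vanishes at the top center
    have hcont : Continuous fun x : Fin 3 → ℝ => Vf W R x₀ 0 ((0 : Fin 4).insertNth (b 0) x) := by
      have hC : Continuous fun x : Fin 3 → ℝ => ((0 : Fin 4).insertNth (b 0) x : R4) := by
        apply continuous_pi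
        intro j
        simp only [Fin.insertNth_zero']
        refine Fin.cases ?_ (fun i => ?_) j
        · show Continuous fun _ : Fin 3 → ℝ => b 0
          exact continuous_const
        · show Continuous fun x : Fin 3 → ℝ => x i
          exact continuous_apply i
      exact (hVcd 0).continuous.comp hC
    have hFf0 : (∫ x in Set.Icc (a ∘ (0 : Fin 4).succAbove) (b ∘ (0 : Fin 4).succAbove),
        Vf W R x₀ 0 ((0 : Fin 4).insertNth (b 0) x)) = 0 := htopz
    have hptwise := integral_zero_on_box hcont
      (fun x => by
        show 0 ≤ Vf W R x₀ 0 ((0 : Fin 4).insertNth (b 0) x)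
        rw [htopint x]; exact eD_nonneg W _) hFf0
      (x := fun _ => 0) (by
        intro j _
        constructor
        · show (a ∘ (0 : Fin 4).succAbove) j < 0
          simp [ha, Fin.succAbove_zero]
        · show (0:ℝ) < (b ∘ (0 : Fin 4).succAbove) j
          simp [hb, Fin.succAbove_zero])
    have hPhiz : Phi R x₀ (Fin.cons t₁ (fun _ => 0)) = z := by
      funext j
      refine Fin.cases ?_ (fun i => ?_) j
      · rfl
      · show x₀ i + (R - t₁) * 0 = z i.succ
        simp [hx₀]
    rw [show ((fun _ => 0 : Fin 3 → ℝ)) = (fun _ => 0 : Fin 3 → ℝ) from rfl] at hptwise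
    have hpt2 : Vf W R x₀ 0 ((0 : Fin 4).insertNth (b 0) (fun _ => 0)) = 0 := hptwise
    rw [htopint, hPhiz] at hpt2
    exact hpt2
  -- now propagate: the time derivative vanishes on the slab
  intro z hz
  set c : ℝ → R4 := fun s => Function.update z 0 s with hc
  have hcs : ∀ s : ℝ, c s = c 0 + s • (Pi.single 0 1 : R4) := by
    intro s
    funext j
    by_cases hj : j = 0
    · subst hj; simp [hc]
    · simp [hc, Function.update_of_ne hj, Pi.single_apply, hj]
  have hc0 : ∀ s : ℝ, c s 0 = s := fun s => Function.update_self 0 s z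
  have hkey : ∀ s ∈ Set.Ico 0 T, pdn 0 W (c s) = 0 := by
    intro s hs
    rcases eq_or_lt_of_le hs.1 with h | h
    · exact h1 (c s) (by rw [hc0, ← h])
    · have he := key (c s) ⟨by rwa [hc0], by rw [hc0]; exact hs.2.le⟩
      unfold eD at he
      have hnn : (0:ℝ) ≤ ∑ i : Fin 3, pdn i.succ W (c s) ^ 2 :=
        Finset.sum_nonneg fun i _ => sq_nonneg _
      have h02 : pdn 0 W (c s) ^ 2 = 0 := by nlinarith [sq_nonneg (pdn 0 W (c s))]
      exact pow_eq_zero_iff (n := 2) (by norm_num) |>.1 h02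
  have hWc : ContinuousOn (fun s => W (c s)) (Set.Icc 0 T) := by
    apply Continuous.continuousOn
    apply (hW.continuous).comp
    apply continuous_pi
    intro j
    by_cases hj : j = 0
    · subst hj
      simp only [hc, Function.update_self]
      exact continuous_id
    · simpa [hc, Function.update_of_ne hj] using continuous_const
  have hderiv : ∀ s ∈ Set.Ico 0 T, HasDerivWithinAt (fun s => W (c s)) 0 (Set.Ici s) s := by
    intro s hs
    have hdiff : DifferentiableAt ℝ W (c 0 + s • (Pi.single 0 1 : R4)) :=
      (hW.differentiable (by simp)) _
    have hline := hasDerivAt_line (f := W) (x := c 0) (v := (Pi.single 0 1 : R4)) (s₀ := s) hdiff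
    have hline' : HasDerivAt (fun u => W (c u)) (fderiv ℝ W (c s) (Pi.single 0 1)) s := by
      rw [← hcs s] at hline
      have hfe : (fun u => W (c u)) = fun u => W (c 0 + u • (Pi.single 0 1 : R4)) := by
        funext u
        rw [hcs u]
      rw [hfe]; exact hline
    have h0' : fderiv ℝ W (c s) (Pi.single 0 1) = 0 := hkey s hs
    rw [h0'] at hline'
    exact hline'.hasDerivWithinAt
  have hconst := constant_of_has_deriv_right_zero hWc hderiv (z 0) hz
  have hcz : c (z 0) = z := Function.update_eq_self 0 z
  rw [hcz] at hconst
  rw [hconst]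
  exact h0 (c 0) (hc0 0)

end WaveD
noncomputable section Bridge

/-- Identification of `Fin 3 → ℝ` with `E3`. -/
def ι3 : (Fin 3 → ℝ) →L[ℝ] E3 :=
  ((EuclideanSpace.equiv (Fin 3) ℝ).symm : ((Fin 3) → ℝ) ≃L[ℝ] E3).toContinuousLinearMap

lemma ι3_apply (v : Fin 3 → ℝ) (k : Fin 3) : ι3 v k = v k := rfl

/-- Linear identification of `ℝ⁴` with `ℝ × E3`. -/
def qmap : R4 →L[ℝ] ℝ × E3 :=
  (ContinuousLinearMap.proj 0).prod
    (ι3.comp (ContinuousLinearMap.pi fun i : Fin 3 => ContinuousLinearMap.proj i.succ))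

lemma qmap_apply (z : R4) : qmap z = (z 0, ι3 fun i => z i.succ) := rfl

lemma qmap_single_zero : qmap (Pi.single 0 1) = ((1:ℝ), (0:E3)) := by
  rw [qmap_apply]
  have h1 : (Pi.single 0 1 : R4) 0 = 1 := by simp
  have h2 : (fun i : Fin 3 => (Pi.single 0 1 : R4) i.succ) = 0 := by
    funext i
    simp [Pi.single_apply, Fin.succ_ne_zero]
  rw [h1, h2, map_zero]

lemma qmap_single_succ (j : Fin 3) : qmap (Pi.single j.succ 1) = ((0:ℝ), e3 j) := by
  rw [qmap_apply]
  have h1 : (Pi.single j.succ 1 : R4) 0 = 0 := by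
    simp [Pi.single_apply, Ne.symm (Fin.succ_ne_zero j)]
  have h2 : (fun i : Fin 3 => (Pi.single j.succ 1 : R4) i.succ)
      = Pi.single j 1 := by
    funext i
    simp [Pi.single_apply, Fin.succ_inj]
  rw [h1, h2]
  have h3 : ι3 (Pi.single j 1) = e3 j := by
    ext k
    rw [ι3_apply]
    rw [show e3 j k = (EuclideanSpace.single j (1:ℝ)) k from rfl,
      EuclideanSpace.single_apply]
    simp [Pi.single_apply]
  rw [h3]

variable {F : Type*} [NormedAddCommGroup F] [NormedSpace ℝ F]

lemma partial_time {H : ℝ × E3 → F} {t : ℝ} {x : E3}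
    (hH : DifferentiableAt ℝ H (t, x)) :
    HasDerivAt (fun s => H (s, x)) (fderiv ℝ H (t, x) ((1:ℝ), (0:E3))) t := by
  have hc : HasDerivAt (fun s : ℝ => (s, x)) ((1:ℝ), (0:E3)) t :=
    (hasDerivAt_id t).prodMk (hasDerivAt_const t x)
  exact hH.hasFDerivAt.comp_hasDerivAt t hc

lemma partial_time_eq {H : ℝ × E3 → F} {t : ℝ} {x : E3}
    (hH : DifferentiableAt ℝ H (t, x)) {m : F}
    (hm : HasDerivAt (fun s => H (s, x)) m t) :
    fderiv ℝ H (t, x) ((1:ℝ), (0:E3)) = m :=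
  (partial_time hH).unique hm

lemma partial_spatial {H : ℝ × E3 → F} {t : ℝ} {x : E3}
    (hH : DifferentiableAt ℝ H (t, x)) (v : E3) :
    fderiv ℝ (fun y => H (t, y)) x v = fderiv ℝ H (t, x) ((0:ℝ), v) := by
  have hc : HasFDerivAt (fun y : E3 => ((t:ℝ), y)) (ContinuousLinearMap.inr ℝ ℝ E3) x :=
    (hasFDerivAt_const t x).prodMk (hasFDerivAt_id x)
  have h2 : HasFDerivAt (fun y : E3 => H (t, y))
      ((fderiv ℝ H (t, x)).comp (ContinuousLinearMap.inr ℝ ℝ E3)) x :=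
    hH.hasFDerivAt.comp x hc
  rw [h2.fderiv]
  rfl

lemma pdn_comp_qmap {g : ℝ × E3 → ℝ} {z : R4} (hg : DifferentiableAt ℝ g (qmap z)) (j : Fin 4) :
    pdn j (fun y => g (qmap y)) z = fderiv ℝ g (qmap z) (qmap (Pi.single j 1)) := by
  have h2 : HasFDerivAt (fun y => g (qmap y))
      ((fderiv ℝ g (qmap z)).comp (qmap : R4 →L[ℝ] ℝ × E3)) z :=
    hg.hasFDerivAt.comp z qmap.hasFDerivAt
  rw [pdn, h2.fderiv]
  rfl

lemma contDiff_comp_qmap {g : ℝ × E3 → F} (hg : ContDiff ℝ (⊤ : ℕ∞) g) :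
    ContDiff ℝ (⊤ : ℕ∞) (fun y => g (qmap y)) := hg.comp qmap.contDiff

lemma contDiff_slice {H : ℝ × E3 → F} (hH : ContDiff ℝ (⊤ : ℕ∞) H) (t : ℝ) :
    ContDiff ℝ (⊤ : ℕ∞) (fun y : E3 => H (t, y)) :=
  hH.comp (contDiff_const.prodMk contDiff_id)

end Bridge
noncomputable section SpatialCalc

/-- Coordinate projection on `E3`. -/
def πE (i : Fin 3) : E3 →L[ℝ] ℝ :=
  (ContinuousLinearMap.proj i).comp (EuclideanSpace.equiv (Fin 3) ℝ).toContinuousLinearMap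

lemma πE_apply (i : Fin 3) (y : E3) : πE i y = y i := rfl

variable {x : E3}

lemma pd_eq_fderiv (i : Fin 3) (f : E3 → ℂ) (x : E3) : pd i f x = fderiv ℝ f x (e3 i) := rfl

lemma pdC_mul {f g : E3 → ℂ} (hf : DifferentiableAt ℝ f x) (hg : DifferentiableAt ℝ g x)
    (i : Fin 3) : pd i (fun y => f y * g y) x = f x * pd i g x + pd i f x * g x := by
  have h := (hf.hasFDerivAt.mul' hg.hasFDerivAt).fderiv
  simp only [pd]
  rw [show (fun y => f y * g y) = f * g from rfl, h]
  simp [mul_comm]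

lemma pdC_sub {f g : E3 → ℂ} (hf : DifferentiableAt ℝ f x) (hg : DifferentiableAt ℝ g x)
    (i : Fin 3) : pd i (fun y => f y - g y) x = pd i f x - pd i g x := by
  simp [pd, fderiv_fun_sub hf hg]

lemma pd_conj {f : E3 → ℂ} (hf : DifferentiableAt ℝ f x) (i : Fin 3) :
    pd i (fun y => (starRingEnd ℂ) (f y)) x = (starRingEnd ℂ) (pd i f x) := by
  have h : HasFDerivAt (fun y => (starRingEnd ℂ) (f y))
      (((Complex.conjCLE : ℂ ≃L[ℝ] ℂ) : ℂ →L[ℝ] ℂ).comp (fderiv ℝ f x)) x := by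
    exact ((Complex.conjCLE : ℂ ≃L[ℝ] ℂ).toContinuousLinearMap.hasFDerivAt).comp x
      hf.hasFDerivAt
  rw [pd, h.fderiv]
  rfl

lemma pdR_two_im {h : E3 → ℂ} (hh : DifferentiableAt ℝ h x) (i : Fin 3) :
    pdR i (fun y => 2 * (h y).im) x = 2 * (pd i h x).im := by
  have h1 : HasFDerivAt (fun y => 2 * (h y).im)
      ((2:ℝ) • (Complex.imCLM.comp (fderiv ℝ h x))) x :=
    ((Complex.imCLM.hasFDerivAt).comp x hh.hasFDerivAt).const_mul 2
  rw [pdR, h1.fderiv]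
  rfl

lemma pd_ofReal_comp {B : E3 → E3} (hB : DifferentiableAt ℝ B x) (i k : Fin 3) :
    pd i (fun y => ((B y k : ℝ) : ℂ)) x = ((pdR i (fun y => B y k) x : ℝ) : ℂ) := by
  have hBk : HasFDerivAt (fun y => B y k) ((πE k).comp (fderiv ℝ B x)) x :=
    ((πE k).hasFDerivAt).comp x hB.hasFDerivAt
  have h : HasFDerivAt (fun y => ((B y k : ℝ) : ℂ))
      (Complex.ofRealCLM.comp ((πE k).comp (fderiv ℝ B x))) x :=
    (Complex.ofRealCLM.hasFDerivAt).comp x hBk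
  rw [pd, h.fderiv, pdR, hBk.fderiv]
  rfl

lemma contDiff_pd {f : E3 → ℂ} (hf : ContDiff ℝ (⊤ : ℕ∞) f) (i : Fin 3) :
    ContDiff ℝ (⊤ : ℕ∞) (pd i f) := by
  unfold pd
  exact (hf.fderiv_right (by simp)).clm_apply contDiff_const

lemma contDiff_Bk {B : E3 → E3} (hB : ContDiff ℝ (⊤ : ℕ∞) B) (k : Fin 3) :
    ContDiff ℝ (⊤ : ℕ∞) (fun y => B y k) := (πE k).contDiff.comp hB

/-- Pointwise continuity equation `∂ₜ|u|² + div J = 0` from the Schrödinger equation. -/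
lemma continuity_eq {f g : E3 → ℂ} {B : E3 → E3} {p : E3 → ℝ}
    (hf : ContDiff ℝ (⊤ : ℕ∞) f) (hB : ContDiff ℝ (⊤ : ℕ∞) B)
    (heq : ∀ x, Complex.I * g x = -(deltaA B f x) + ((p x : ℝ) : ℂ) * f x) (x : E3) :
    2 * ((starRingEnd ℂ) (f x) * g x).re
      + ∑ i : Fin 3, pdR i (fun y => currentJ f B i y) x = 0 := by
  have hfd : ∀ y, DifferentiableAt ℝ f y := fun y => (hf.differentiable (by simp)) y
  have hBd : ∀ y, DifferentiableAt ℝ B y := fun y => (hB.differentiable (by simp)) y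
  have hpdf : ∀ i : Fin 3, DifferentiableAt ℝ (pd i f) x :=
    fun i => ((contDiff_pd hf i).differentiable (by simp)) x
  have hBk : ∀ k : Fin 3, DifferentiableAt ℝ (fun y => ((B y k : ℝ) : ℂ)) x := by
    intro k
    exact Complex.ofRealCLM.differentiableAt.comp x
      (((πE k).differentiableAt).comp x (hBd x))
  -- compute the divergence of the current
  have hdivJ : ∀ i : Fin 3, pdR i (fun y => currentJ f B i y) x
      = 2 * ((starRingEnd ℂ) (pd i f x) * (pd i f x - Complex.I * (B x i : ℂ) * f x)
          + (starRingEnd ℂ) (f x) * (pd i (pd i f) x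
            - (Complex.I * ((pdR i (fun y => B y i) x : ℝ) : ℂ) * f x
               + Complex.I * (B x i : ℂ) * pd i f x))).im := by
    intro i
    have hg2 : DifferentiableAt ℝ (fun y => pd i f y - Complex.I * (B y i : ℂ) * f y) x := by
      apply DifferentiableAt.sub (hpdf i)
      exact (((hBk i).const_mul Complex.I).mul (hfd x))
    have hh : DifferentiableAt ℝ
        (fun y => (starRingEnd ℂ) (f y) * (pd i f y - Complex.I * (B y i : ℂ) * f y)) x := by
      apply DifferentiableAt.mul ?_ hg2
      exact (Complex.conjCLE : ℂ ≃L[ℝ] ℂ).toContinuousLinearMap.differentiableAt.comp x (hfd x)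
    have hJ : (fun y => currentJ f B i y)
        = fun y => 2 * (((starRingEnd ℂ) (f y)
            * (pd i f y - Complex.I * (B y i : ℂ) * f y)).im) := rfl
    have hconjd : DifferentiableAt ℝ (fun y => (starRingEnd ℂ) (f y)) x :=
      ((Complex.conjCLE : ℂ ≃L[ℝ] ℂ).toContinuousLinearMap.differentiableAt).comp x (hfd x)
    rw [hJ, pdR_two_im hh i]
    congr 1
    rw [pdC_mul hconjd hg2 i]
    rw [pd_conj (hfd x) i]
    rw [pdC_sub (hpdf i) (((hBk i).const_mul Complex.I).fun_mul (hfd x)) i]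
    have hmul : pd i (fun y => Complex.I * (B y i : ℂ) * f y) x
        = Complex.I * ((pdR i (fun y => B y i) x : ℝ) : ℂ) * f x
          + Complex.I * (B x i : ℂ) * pd i f x := by
      have e1 : (fun y => Complex.I * (B y i : ℂ) * f y)
          = fun y => (Complex.I * (B y i : ℂ)) * f y := by funext y; ring
      rw [e1, pdC_mul ((hBk i).const_mul Complex.I) (hfd x) i]
      have e2 : pd i (fun y => Complex.I * ((B y i : ℝ) : ℂ)) x
          = Complex.I * ((pdR i (fun y => B y i) x : ℝ) : ℂ) := by
        have e3 : (fun y => Complex.I * ((B y i : ℝ) : ℂ))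
            = fun y => Complex.I * ((fun y' => ((B y' i : ℝ) : ℂ)) y) := rfl
        rw [e3, pd, fderiv_const_mul (hBk i) Complex.I]
        simp only [ContinuousLinearMap.smul_apply, smul_eq_mul]
        rw [← pd, pd_ofReal_comp (hBd x) i i]
      rw [e2]
      ring
    rw [hmul]
    ring
  -- express g via the equation and conclude by algebra
  have hgx : g x = -Complex.I * (-(deltaA B f x) + ((p x : ℝ) : ℂ) * f x) := by
    have h := heq x
    have h2 : -Complex.I * (Complex.I * g x)
        = -Complex.I * (-(deltaA B f x) + ((p x : ℝ) : ℂ) * f x) := by rw [h]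
    have h3 : -Complex.I * (Complex.I * g x) = -(Complex.I * Complex.I) * g x := by ring
    rw [h3, Complex.I_mul_I] at h2
    simpa using h2
  rw [Finset.sum_congr rfl fun i _ => hdivJ i, hgx]
  unfold deltaA dotGrad lap divg
  rw [show ((‖B x‖ ^ 2 : ℝ) : ℂ) = ((‖B x‖ ^ 2 : ℝ) : ℂ) from rfl]
  simp only [Fin.sum_univ_three]
  set a := f x
  set c0 := pd 0 f x; set c1 := pd 1 f x; set c2 := pd 2 f x
  set d0 := pd 0 (pd 0 f) x; set d1 := pd 1 (pd 1 f) x; set d2 := pd 2 (pd 2 f) x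
  set b0 := B x 0; set b1 := B x 1; set b2 := B x 2
  set m0 := pdR 0 (fun y => B y 0) x; set m1 := pdR 1 (fun y => B y 1) x
  set m2 := pdR 2 (fun y => B y 2) x
  set r := ‖B x‖ ^ 2
  set q := p x
  simp only [Complex.mul_re, Complex.mul_im, Complex.add_re, Complex.add_im,
    Complex.sub_re, Complex.sub_im, Complex.neg_re, Complex.neg_im, Complex.I_re,
    Complex.I_im, Complex.ofReal_re, Complex.ofReal_im, Complex.conj_re, Complex.conj_im,
    Complex.re_ofNat, Complex.im_ofNat]
  ring
end SpatialCalc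
noncomputable section BoxAlg

/-- Time derivative operator on `ℝ × E3`. -/
def DtF (H : ℝ × E3 → ℝ) : ℝ × E3 → ℝ := fun p => fderiv ℝ H p ((1:ℝ), (0:E3))

/-- Spatial derivative operator on `ℝ × E3`. -/
def DjF (j : Fin 3) (H : ℝ × E3 → ℝ) : ℝ × E3 → ℝ := fun p => fderiv ℝ H p ((0:ℝ), e3 j)

/-- Wave operator. -/
def BoxF (H : ℝ × E3 → ℝ) : ℝ × E3 → ℝ :=
  fun p => DtF (DtF H) p - ∑ j : Fin 3, DjF j (DjF j H) p

lemma DtF_cd {H : ℝ × E3 → ℝ} (hH : ContDiff ℝ (⊤ : ℕ∞) H) : ContDiff ℝ (⊤ : ℕ∞) (DtF H) := by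
  unfold DtF
  exact (hH.fderiv_right (by simp)).clm_apply contDiff_const

lemma DjF_cd {H : ℝ × E3 → ℝ} (hH : ContDiff ℝ (⊤ : ℕ∞) H) (j : Fin 3) :
    ContDiff ℝ (⊤ : ℕ∞) (DjF j H) := by
  unfold DjF
  exact (hH.fderiv_right (by simp)).clm_apply contDiff_const

lemma BoxF_cd {H : ℝ × E3 → ℝ} (hH : ContDiff ℝ (⊤ : ℕ∞) H) : ContDiff ℝ (⊤ : ℕ∞) (BoxF H) := by
  unfold BoxF
  exact (DtF_cd (DtF_cd hH)).sub (ContDiff.sum fun j _ => DjF_cd (DjF_cd hH j) j)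

lemma fderiv_add_apply' {E : Type*} [NormedAddCommGroup E] [NormedSpace ℝ E]
    {f g : E → ℝ} {x : E} (hf : DifferentiableAt ℝ f x) (hg : DifferentiableAt ℝ g x)
    (v : E) : fderiv ℝ (fun y => f y + g y) x v = fderiv ℝ f x v + fderiv ℝ g x v := by
  rw [fderiv_fun_add hf hg]; rfl

lemma fderiv_sub_apply' {E : Type*} [NormedAddCommGroup E] [NormedSpace ℝ E]
    {f g : E → ℝ} {x : E} (hf : DifferentiableAt ℝ f x) (hg : DifferentiableAt ℝ g x)
    (v : E) : fderiv ℝ (fun y => f y - g y) x v = fderiv ℝ f x v - fderiv ℝ g x v := by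
  rw [fderiv_fun_sub hf hg]; rfl

lemma fderiv_sum_apply' {E : Type*} [NormedAddCommGroup E] [NormedSpace ℝ E]
    {ι : Type*} {s : Finset ι} {f : ι → E → ℝ} {x : E}
    (hf : ∀ i ∈ s, DifferentiableAt ℝ (f i) x) (v : E) :
    fderiv ℝ (fun y => ∑ i ∈ s, f i y) x v = ∑ i ∈ s, fderiv ℝ (f i) x v := by
  rw [fderiv_fun_sum hf]
  simp

/-- Third-order derivative swap `D_v D_v D_w = D_w D_v D_v`. -/
lemma swap3 {H : ℝ × E3 → ℝ} (hH : ContDiff ℝ (⊤ : ℕ∞) H) (v w p : ℝ × E3) :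
    fderiv ℝ (fun p' => fderiv ℝ (fun q => fderiv ℝ H q w) p' v) p v
      = fderiv ℝ (fun p' => fderiv ℝ (fun q => fderiv ℝ H q v) p' v) p w := by
  have c1 : (fun p' => fderiv ℝ (fun q => fderiv ℝ H q w) p' v)
      = fun p' => fderiv ℝ (fun q => fderiv ℝ H q v) p' w :=
    funext fun p' => fderiv_fderiv_comm hH w v p'
  rw [c1]
  exact fderiv_fderiv_comm (contDiff_fderiv_apply hH v) w v p

lemma swap3' {H : ℝ × E3 → ℝ} (hH : ContDiff ℝ (⊤ : ℕ∞) H) (v w p : ℝ × E3) :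
    DtF (fun p' => fderiv ℝ H p' v) p = fderiv ℝ (DtF H) p v :=
  fderiv_fderiv_comm hH v ((1:ℝ), (0:E3)) p

/-- Key commutation identity: the wave operator applied to
`K = ∂ₜ Kφ + ∑ᵢ ∂ᵢ (KA i)` equals `∂ₜ (□ Kφ) + ∑ᵢ ∂ᵢ (□ (KA i))`. -/
lemma box_K {Kφ : ℝ × E3 → ℝ} {KA : Fin 3 → ℝ × E3 → ℝ}
    (hφ : ContDiff ℝ (⊤ : ℕ∞) Kφ) (hA : ∀ i, ContDiff ℝ (⊤ : ℕ∞) (KA i)) (p : ℝ × E3) :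
    DtF (DtF (fun q => DtF Kφ q + ∑ i : Fin 3, DjF i (KA i) q)) p
      - ∑ j : Fin 3, DjF j (DjF j (fun q => DtF Kφ q + ∑ i : Fin 3, DjF i (KA i) q)) p
      = DtF (BoxF Kφ) p + ∑ i : Fin 3, DjF i (BoxF (KA i)) p := by
  have hdφ1 : ContDiff ℝ (⊤ : ℕ∞) (DtF Kφ) := DtF_cd hφ
  have hdφ2 : ContDiff ℝ (⊤ : ℕ∞) (DtF (DtF Kφ)) := DtF_cd hdφ1
  have hdA1 : ∀ i, ContDiff ℝ (⊤ : ℕ∞) (DjF i (KA i)) := fun i => DjF_cd (hA i) i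
  have hdA1t : ∀ i, ContDiff ℝ (⊤ : ℕ∞) (DtF (KA i)) := fun i => DtF_cd (hA i)
  have A1 : DtF (fun q => DtF Kφ q + ∑ i : Fin 3, DjF i (KA i) q)
      = fun q => DtF (DtF Kφ) q + ∑ i : Fin 3, DjF i (DtF (KA i)) q := by
    funext q
    show fderiv ℝ (fun q' => DtF Kφ q' + ∑ i : Fin 3, DjF i (KA i) q') q ((1:ℝ), (0:E3)) = _
    rw [fderiv_add_apply' ((hdφ1.differentiable (by simp)) q)
      ((ContDiff.sum fun i _ => hdA1 i).differentiable (by simp) q),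
      fderiv_sum_apply' (fun i _ => ((hdA1 i).differentiable (by simp)) q)]
    congr 1
    refine Finset.sum_congr rfl fun i _ => ?_
    exact fderiv_fderiv_comm (hA i) ((0:ℝ), e3 i) ((1:ℝ), (0:E3)) q
  have A2 : ∀ j : Fin 3, DjF j (fun q => DtF Kφ q + ∑ i : Fin 3, DjF i (KA i) q)
      = fun q => DjF j (DtF Kφ) q + ∑ i : Fin 3, DjF j (DjF i (KA i)) q := by
    intro j
    funext q
    show fderiv ℝ (fun q' => DtF Kφ q' + ∑ i : Fin 3, DjF i (KA i) q') q ((0:ℝ), e3 j) = _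
    rw [fderiv_add_apply' ((hdφ1.differentiable (by simp)) q)
      ((ContDiff.sum fun i _ => hdA1 i).differentiable (by simp) q),
      fderiv_sum_apply' (fun i _ => ((hdA1 i).differentiable (by simp)) q)]
    rfl
  have B1 : DtF (DtF (fun q => DtF Kφ q + ∑ i : Fin 3, DjF i (KA i) q)) p
      = DtF (DtF (DtF Kφ)) p + ∑ i : Fin 3, DjF i (DtF (DtF (KA i))) p := by
    rw [A1]
    show fderiv ℝ (fun q => DtF (DtF Kφ) q + ∑ i : Fin 3, DjF i (DtF (KA i)) q) p
      ((1:ℝ), (0:E3)) = _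
    rw [fderiv_add_apply' ((hdφ2.differentiable (by simp)) p)
      ((ContDiff.sum fun i _ => DjF_cd (hdA1t i) i).differentiable (by simp) p),
      fderiv_sum_apply' (fun i _ => ((DjF_cd (hdA1t i) i).differentiable (by simp)) p)]
    congr 1
    refine Finset.sum_congr rfl fun i _ => ?_
    exact fderiv_fderiv_comm (hdA1t i) ((0:ℝ), e3 i) ((1:ℝ), (0:E3)) p
  have B2 : ∀ j : Fin 3, DjF j (DjF j (fun q => DtF Kφ q + ∑ i : Fin 3, DjF i (KA i) q)) p
      = DtF (DjF j (DjF j Kφ)) p + ∑ i : Fin 3, DjF i (DjF j (DjF j (KA i))) p := by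
    intro j
    rw [A2 j]
    show fderiv ℝ (fun q => DjF j (DtF Kφ) q + ∑ i : Fin 3, DjF j (DjF i (KA i)) q) p
      ((0:ℝ), e3 j) = _
    rw [fderiv_add_apply' (((DjF_cd hdφ1 j)).differentiable (by simp) p)
      ((ContDiff.sum fun i _ => DjF_cd (DjF_cd (hA i) i) j).differentiable (by simp) p),
      fderiv_sum_apply' (fun i _ => ((DjF_cd (DjF_cd (hA i) i) j).differentiable (by simp)) p)]
    congr 1
    · exact swap3 hφ ((0:ℝ), e3 j) ((1:ℝ), (0:E3)) p
    · refine Finset.sum_congr rfl fun i _ => ?_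
      exact swap3 (hA i) ((0:ℝ), e3 j) ((0:ℝ), e3 i) p
  rw [B1, Finset.sum_congr rfl fun j _ => B2 j]
  have C1 : DtF (BoxF Kφ) p
      = DtF (DtF (DtF Kφ)) p - ∑ j : Fin 3, DtF (DjF j (DjF j Kφ)) p := by
    show fderiv ℝ (fun q => DtF (DtF Kφ) q - ∑ j : Fin 3, DjF j (DjF j Kφ) q) p
      ((1:ℝ), (0:E3)) = _
    rw [fderiv_sub_apply' ((hdφ2.differentiable (by simp)) p)
      ((ContDiff.sum fun j _ => DjF_cd (DjF_cd hφ j) j).differentiable (by simp) p),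
      fderiv_sum_apply' (fun j _ => ((DjF_cd (DjF_cd hφ j) j).differentiable (by simp)) p)]
    rfl
  have C2 : ∀ i : Fin 3, DjF i (BoxF (KA i)) p
      = DjF i (DtF (DtF (KA i))) p - ∑ j : Fin 3, DjF i (DjF j (DjF j (KA i))) p := by
    intro i
    show fderiv ℝ (fun q => DtF (DtF (KA i)) q - ∑ j : Fin 3, DjF j (DjF j (KA i)) q) p
      ((0:ℝ), e3 i) = _
    rw [fderiv_sub_apply' ((DtF_cd (hdA1t i)).differentiable (by simp) p)
      ((ContDiff.sum fun j _ => DjF_cd (DjF_cd (hA i) j) j).differentiable (by simp) p),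
      fderiv_sum_apply' (fun j _ => ((DjF_cd (DjF_cd (hA i) j) j).differentiable (by simp)) p)]
    rfl
  rw [C1, Finset.sum_congr rfl fun i _ => C2 i]
  simp only [Finset.sum_add_distrib, Finset.sum_sub_distrib]
  rw [Finset.sum_comm]
  ring

end BoxAlg
noncomputable section Assemble

/-- Uncurried potential. -/
def Pph (φ : ℝ → E3 → ℝ) : ℝ × E3 → ℝ := fun p => φ p.1 p.2
/-- Uncurried vector potential components. -/
def PAc (A : ℝ → E3 → E3) (i : Fin 3) : ℝ × E3 → ℝ := fun p => A p.1 p.2 i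
/-- Uncurried wave function. -/
def Puc (u : ℝ → E3 → ℂ) : ℝ × E3 → ℂ := fun p => u p.1 p.2
/-- The uncurried gauge constraint function. -/
def Kbig (φ : ℝ → E3 → ℝ) (A : ℝ → E3 → E3) : ℝ × E3 → ℝ :=
  fun p => DtF (Pph φ) p + ∑ i : Fin 3, DjF i (PAc A i) p
/-- The constraint in `ℝ⁴` coordinates. -/
def W4 (φ : ℝ → E3 → ℝ) (A : ℝ → E3 → E3) : R4 → ℝ := fun z => Kbig φ A (qmap z)
/-- Uncurried charge density. -/
def rhoF (u : ℝ → E3 → ℂ) : ℝ × E3 → ℝ :=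
  fun p => (Puc u p).re ^ 2 + (Puc u p).im ^ 2
/-- Uncurried current density. -/
def JF (u : ℝ → E3 → ℂ) (A : ℝ → E3 → E3) (i : Fin 3) : ℝ × E3 → ℝ :=
  fun p => 2 * ((starRingEnd ℂ) (Puc u p) * (fderiv ℝ (Puc u) p ((0:ℝ), e3 i)
    - Complex.I * ((PAc A i p : ℝ) : ℂ) * Puc u p)).im

variable {u : ℝ → E3 → ℂ} {φ : ℝ → E3 → ℝ} {A : ℝ → E3 → E3}

lemma PAc_cd (hA : ContDiff ℝ (⊤ : ℕ∞) (Function.uncurry A)) (i : Fin 3) :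
    ContDiff ℝ (⊤ : ℕ∞) (PAc A i) := (πE i).contDiff.comp hA

lemma Kbig_cd (hφ : ContDiff ℝ (⊤ : ℕ∞) (Function.uncurry φ))
    (hA : ContDiff ℝ (⊤ : ℕ∞) (Function.uncurry A)) : ContDiff ℝ (⊤ : ℕ∞) (Kbig φ A) := by
  unfold Kbig
  exact (DtF_cd hφ).add (ContDiff.sum fun i _ => DjF_cd (PAc_cd hA i) i)

lemma rhoF_cd (hu : ContDiff ℝ (⊤ : ℕ∞) (Function.uncurry u)) : ContDiff ℝ (⊤ : ℕ∞) (rhoF u) := by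
  unfold rhoF
  have h1 : ContDiff ℝ (⊤ : ℕ∞) (fun p => (Puc u p).re) := Complex.reCLM.contDiff.comp hu
  have h2 : ContDiff ℝ (⊤ : ℕ∞) (fun p => (Puc u p).im) := Complex.imCLM.contDiff.comp hu
  exact (h1.pow 2).add (h2.pow 2)

lemma JF_cd (hu : ContDiff ℝ (⊤ : ℕ∞) (Function.uncurry u))
    (hA : ContDiff ℝ (⊤ : ℕ∞) (Function.uncurry A)) (i : Fin 3) : ContDiff ℝ (⊤ : ℕ∞) (JF u A i) := by
  unfold JF
  have hconj : ContDiff ℝ (⊤ : ℕ∞) (fun p => (starRingEnd ℂ) (Puc u p)) :=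
    (Complex.conjCLE : ℂ ≃L[ℝ] ℂ).toContinuousLinearMap.contDiff.comp hu
  have hfd : ContDiff ℝ (⊤ : ℕ∞) (fun p => fderiv ℝ (Puc u) p ((0:ℝ), e3 i)) :=
    (hu.fderiv_right (by simp)).clm_apply contDiff_const
  have hBc : ContDiff ℝ (⊤ : ℕ∞) (fun p => ((PAc A i p : ℝ) : ℂ)) :=
    Complex.ofRealCLM.contDiff.comp (PAc_cd hA i)
  have hin : ContDiff ℝ (⊤ : ℕ∞) (fun p => fderiv ℝ (Puc u) p ((0:ℝ), e3 i)
      - Complex.I * ((PAc A i p : ℝ) : ℂ) * Puc u p) :=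
    hfd.sub (((contDiff_const.mul hBc)).mul hu)
  exact contDiff_const.mul (Complex.imCLM.contDiff.comp (hconj.mul hin))

lemma DtF_Kbig_split (hφ : ContDiff ℝ (⊤ : ℕ∞) (Function.uncurry φ))
    (hA : ContDiff ℝ (⊤ : ℕ∞) (Function.uncurry A)) :
    DtF (Kbig φ A) = fun q => DtF (DtF (Pph φ)) q + ∑ i : Fin 3, DjF i (DtF (PAc A i)) q := by
  funext q
  have hdφ1 : ContDiff ℝ (⊤ : ℕ∞) (DtF (Pph φ)) := DtF_cd hφ
  have hdA1 : ∀ i : Fin 3, ContDiff ℝ (⊤ : ℕ∞) (DjF i (PAc A i)) :=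
    fun i => DjF_cd (PAc_cd hA i) i
  show fderiv ℝ (fun q' => DtF (Pph φ) q' + ∑ i : Fin 3, DjF i (PAc A i) q') q
    ((1:ℝ), (0:E3)) = _
  rw [fderiv_add_apply' ((hdφ1.differentiable (by simp)) q)
    ((ContDiff.sum fun i _ => hdA1 i).differentiable (by simp) q),
    fderiv_sum_apply' (fun i _ => ((hdA1 i).differentiable (by simp)) q)]
  congr 1
  refine Finset.sum_congr rfl fun i _ => ?_
  exact fderiv_fderiv_comm (PAc_cd hA i) ((0:ℝ), e3 i) ((1:ℝ), (0:E3)) q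

end Assemble

/-- Propagation of the Lorentz gauge constraint: for a
sufficiently regular solution of `i∂_t u = (-Δ_A + φ)u`, `□φ = |u|²`, `□A = J`,
if `∂_tφ(0) + div A(0) = 0` and `∂_t(∂_tφ + div A)(0) = 0`, then
`∂_tφ + div A = 0` on the whole existence interval. -/
theorem lorentz_gauge_propagation (T : ℝ) (hT : 0 < T)
    (u du : ℝ → E3 → ℂ) (φ dφ ddφ : ℝ → E3 → ℝ) (A dA : ℝ → E3 → E3)
    -- regularity
    (hru : ContDiff ℝ (⊤ : ℕ∞) (uncurry u)) (hrφ : ContDiff ℝ (⊤ : ℕ∞) (uncurry φ))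
    (hrA : ContDiff ℝ (⊤ : ℕ∞) (uncurry A))
    -- time derivatives
    (hdu : ∀ t x, HasDerivAt (fun s => u s x) (du t x) t)
    (hdφ : ∀ t x, HasDerivAt (fun s => φ s x) (dφ t x) t)
    (hddφ : ∀ t x, HasDerivAt (fun s => dφ s x) (ddφ t x) t)
    (hdA : ∀ t x, HasDerivAt (fun s => A s x) (dA t x) t)
    -- the system
    (hSch : ∀ t ∈ Icc 0 T, ∀ x, Complex.I * du t x
      = -(deltaA (A t) (u t) x) + ((φ t x : ℝ) : ℂ) * u t x)
    (hWaveφ : ∀ t ∈ Icc 0 T, ∀ x, ddφ t x - lapR (φ t) x = ‖u t x‖ ^ 2)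
    (hWaveA : ∀ t ∈ Icc 0 T, ∀ x, ∀ i : Fin 3,
      (deriv (fun s => dA s x i) t) - lapR (fun y => A t y i) x
        = currentJ (u t) (A t) i x)
    -- vanishing Cauchy data for the constraint
    (h0 : ∀ x, dφ 0 x + divg (A 0) x = 0)
    (h0' : ∀ x, ddφ 0 x + divg (dA 0) x = 0) :
    ∀ t ∈ Icc 0 T, ∀ x, dφ t x + divg (A t) x = 0 := by
  have hPφ : ContDiff ℝ (⊤ : ℕ∞) (Pph φ) := hrφ
  have hPu : ContDiff ℝ (⊤ : ℕ∞) (Puc u) := hru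
  have hPA : ∀ i : Fin 3, ContDiff ℝ (⊤ : ℕ∞) (PAc A i) := PAc_cd hrA
  have hKb : ContDiff ℝ (⊤ : ℕ∞) (Kbig φ A) := Kbig_cd hrφ hrA
  have hW4 : ContDiff ℝ (⊤ : ℕ∞) (W4 φ A) := hKb.comp qmap.contDiff
  -- time identifications
  have L1 : ∀ t x, DtF (Pph φ) (t, x) = dφ t x := fun t x =>
    partial_time_eq ((hPφ.differentiable (by simp)) (t, x)) (hdφ t x)
  have L2 : ∀ t x, DtF (DtF (Pph φ)) (t, x) = ddφ t x := by
    intro t x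
    refine partial_time_eq (((DtF_cd hPφ).differentiable (by simp)) (t, x)) ?_
    rw [show (fun s => DtF (Pph φ) (s, x)) = fun s => dφ s x from funext fun s => L1 s x]
    exact hddφ t x
  have L3 : ∀ (i : Fin 3) t x, DtF (PAc A i) (t, x) = dA t x i := by
    intro i t x
    refine partial_time_eq (((hPA i).differentiable (by simp)) (t, x)) ?_
    have hm : HasDerivAt (fun s => PAc A i (s, x)) (dA t x i) t :=
      (πE i).hasFDerivAt.comp_hasDerivAt t (hdA t x)
    exact hm
  have L4 : ∀ (i : Fin 3) t x, DtF (DtF (PAc A i)) (t, x) = deriv (fun s => dA s x i) t := by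
    intro i t x
    have h := partial_time (((DtF_cd (hPA i)).differentiable (by simp)) (t, x))
    rw [show (fun s => DtF (PAc A i) (s, x)) = fun s => dA s x i from
      funext fun s => L3 i s x] at h
    exact h.deriv.symm
  -- spatial identifications
  have S1 : ∀ t x (j : Fin 3), DjF j (Pph φ) (t, x) = pdR j (φ t) x := by
    intro t x j
    exact (partial_spatial ((hPφ.differentiable (by simp)) (t, x)) (e3 j)).symm
  have S2 : ∀ t x (j : Fin 3), DjF j (DjF j (Pph φ)) (t, x) = pdR j (pdR j (φ t)) x := by
    intro t x j
    have h1 : pdR j (pdR j (φ t)) x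
        = fderiv ℝ (fun y => DjF j (Pph φ) (t, y)) x (e3 j) := by
      rw [show (fun y => DjF j (Pph φ) (t, y)) = fun y => pdR j (φ t) y from
        funext fun y => S1 t y j]
      rfl
    rw [h1, partial_spatial (((DjF_cd hPφ j).differentiable (by simp)) (t, x)) (e3 j)]
    rfl
  have SA1 : ∀ (i : Fin 3) t x (j : Fin 3),
      DjF j (PAc A i) (t, x) = pdR j (fun y => A t y i) x := by
    intro i t x j
    exact (partial_spatial (((hPA i).differentiable (by simp)) (t, x)) (e3 j)).symm
  have SA2 : ∀ (i : Fin 3) t x (j : Fin 3),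
      DjF j (DjF j (PAc A i)) (t, x) = pdR j (pdR j (fun y => A t y i)) x := by
    intro i t x j
    have h1 : pdR j (pdR j (fun y => A t y i)) x
        = fderiv ℝ (fun y => DjF j (PAc A i) (t, y)) x (e3 j) := by
      rw [show (fun y => DjF j (PAc A i) (t, y)) = fun y => pdR j (fun y' => A t y' i) y from
        funext fun y => SA1 i t y j]
      rfl
    rw [h1, partial_spatial (((DjF_cd (hPA i) j).differentiable (by simp)) (t, x)) (e3 j)]
    rfl
  have SdA : ∀ (i : Fin 3) t x, DjF i (DtF (PAc A i)) (t, x)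
      = pdR i (fun y => dA t y i) x := by
    intro i t x
    have h1 : pdR i (fun y => dA t y i) x
        = fderiv ℝ (fun y => DtF (PAc A i) (t, y)) x (e3 i) := by
      rw [show (fun y => DtF (PAc A i) (t, y)) = fun y => dA t y i from
        funext fun y => L3 i t y]
      rfl
    rw [h1, partial_spatial (((DtF_cd (hPA i)).differentiable (by simp)) (t, x)) (e3 i)]
    rfl
  -- value of Kbig and its time derivative
  have idK : ∀ t x, Kbig φ A (t, x) = dφ t x + divg (A t) x := by
    intro t x
    show DtF (Pph φ) (t, x) + ∑ i : Fin 3, DjF i (PAc A i) (t, x) = _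
    rw [L1]
    congr 1
    exact Finset.sum_congr rfl fun i _ => SA1 i t x i
  have idKt : ∀ t x, DtF (Kbig φ A) (t, x) = ddφ t x + divg (dA t) x := by
    intro t x
    rw [DtF_Kbig_split hrφ hrA]
    show DtF (DtF (Pph φ)) (t, x) + ∑ i : Fin 3, DjF i (DtF (PAc A i)) (t, x) = _
    rw [L2]
    congr 1
    exact Finset.sum_congr rfl fun i _ => SdA i t x
  -- the two wave identities on the slab
  have idBoxφ : ∀ t ∈ Icc (0:ℝ) T, ∀ x, BoxF (Pph φ) (t, x) = rhoF u (t, x) := by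
    intro t ht x
    show DtF (DtF (Pph φ)) (t, x) - ∑ j : Fin 3, DjF j (DjF j (Pph φ)) (t, x) = _
    rw [L2, Finset.sum_congr rfl fun j _ => S2 t x j]
    have : ∑ j : Fin 3, pdR j (pdR j (φ t)) x = lapR (φ t) x := rfl
    rw [this, hWaveφ t ht x]
    have hn : ‖u t x‖ ^ 2 = (u t x).re ^ 2 + (u t x).im ^ 2 := by
      rw [← Complex.normSq_eq_norm_sq,
        Complex.normSq_apply]
      ring
    rw [hn]
    rfl
  have idJ : ∀ (i : Fin 3) t x, JF u A i (t, x) = currentJ (u t) (A t) i x := by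
    intro i t x
    have hpd : pd i (u t) x = fderiv ℝ (Puc u) (t, x) ((0:ℝ), e3 i) :=
      partial_spatial ((hPu.differentiable (by simp)) (t, x)) (e3 i)
    show 2 * ((starRingEnd ℂ) (u t x) * (fderiv ℝ (Puc u) (t, x) ((0:ℝ), e3 i)
      - Complex.I * ((A t x i : ℝ) : ℂ) * u t x)).im = _
    rw [← hpd]
    rfl
  have idBoxA : ∀ (i : Fin 3), ∀ t ∈ Icc (0:ℝ) T, ∀ x,
      BoxF (PAc A i) (t, x) = JF u A i (t, x) := by
    intro i t ht x
    show DtF (DtF (PAc A i)) (t, x) - ∑ j : Fin 3, DjF j (DjF j (PAc A i)) (t, x) = _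
    rw [L4, Finset.sum_congr rfl fun j _ => SA2 i t x j]
    have : ∑ j : Fin 3, pdR j (pdR j (fun y => A t y i)) x = lapR (fun y => A t y i) x := rfl
    rw [this, hWaveA t ht x i, idJ i t x]
  -- hypotheses of the wave-uniqueness lemma
  have hqz : ∀ z : R4, qmap z = (z 0, ι3 fun i => z i.succ) := qmap_apply
  have hdata0 : ∀ z : R4, z 0 = 0 → W4 φ A z = 0 := by
    intro z hz
    show Kbig φ A (qmap z) = 0
    rw [hqz z, hz, idK]
    exact h0 _
  have hdata1 : ∀ z : R4, z 0 = 0 → pdn 0 (W4 φ A) z = 0 := by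
    intro z hz
    have h1 : pdn 0 (W4 φ A) z = DtF (Kbig φ A) (qmap z) := by
      show pdn 0 (fun y => Kbig φ A (qmap y)) z = DtF (Kbig φ A) (qmap z)
      rw [pdn_comp_qmap ((hKb.differentiable (by simp)) _) 0, qmap_single_zero]
      rfl
    rw [h1, hqz z, hz, idKt]
    exact h0' _
  have hwave : ∀ z : R4, z 0 ∈ Ioo 0 T →
      pdn 0 (pdn 0 (W4 φ A)) z = ∑ i : Fin 3, pdn i.succ (pdn i.succ (W4 φ A)) z := by
    intro z hz
    have hfun0 : pdn 0 (W4 φ A) = fun y => DtF (Kbig φ A) (qmap y) := by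
      funext y
      show pdn 0 (fun y' => Kbig φ A (qmap y')) y = DtF (Kbig φ A) (qmap y)
      rw [pdn_comp_qmap ((hKb.differentiable (by simp)) _) 0, qmap_single_zero]
      rfl
    have hfunj : ∀ j : Fin 3, pdn j.succ (W4 φ A) = fun y => DjF j (Kbig φ A) (qmap y) := by
      intro j
      funext y
      show pdn j.succ (fun y' => Kbig φ A (qmap y')) y = DjF j (Kbig φ A) (qmap y)
      rw [pdn_comp_qmap ((hKb.differentiable (by simp)) _) j.succ, qmap_single_succ]
      rfl
    have l0 : pdn 0 (pdn 0 (W4 φ A)) z = DtF (DtF (Kbig φ A)) (qmap z) := by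
      rw [hfun0, pdn_comp_qmap (((DtF_cd hKb).differentiable (by simp)) (qmap z)) 0,
        qmap_single_zero]
      rfl
    have lj : ∀ j : Fin 3, pdn j.succ (pdn j.succ (W4 φ A)) z
        = DjF j (DjF j (Kbig φ A)) (qmap z) := by
      intro j
      rw [hfunj j, pdn_comp_qmap (((DjF_cd hKb j).differentiable (by simp)) (qmap z)) j.succ,
        qmap_single_succ]
      rfl
    rw [l0, Finset.sum_congr rfl fun j _ => lj j, ← sub_eq_zero]
    have hbox : DtF (DtF (Kbig φ A)) (qmap z)
        - ∑ j : Fin 3, DjF j (DjF j (Kbig φ A)) (qmap z)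
        = DtF (BoxF (Pph φ)) (qmap z) + ∑ i : Fin 3, DjF i (BoxF (PAc A i)) (qmap z) :=
      box_K hPφ hPA (qmap z)
    rw [hbox]
    have hopen : IsOpen {q : ℝ × E3 | q.1 ∈ Ioo (0:ℝ) T} :=
      isOpen_Ioo.preimage continuous_fst
    have hmem : (qmap z) ∈ {q : ℝ × E3 | q.1 ∈ Ioo (0:ℝ) T} := by
      rw [hqz z]
      exact hz
    have hevφ : BoxF (Pph φ) =ᶠ[nhds (qmap z)] rhoF u := by
      filter_upwards [hopen.mem_nhds hmem] with q hq
      have h := idBoxφ q.1 ⟨hq.1.le, hq.2.le⟩ q.2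
      simpa using h
    have hevA : ∀ i : Fin 3, BoxF (PAc A i) =ᶠ[nhds (qmap z)] JF u A i := by
      intro i
      filter_upwards [hopen.mem_nhds hmem] with q hq
      have h := idBoxA i q.1 ⟨hq.1.le, hq.2.le⟩ q.2
      simpa using h
    have e1 : DtF (BoxF (Pph φ)) (qmap z) = DtF (rhoF u) (qmap z) := by
      show fderiv ℝ (BoxF (Pph φ)) (qmap z) ((1:ℝ), (0:E3))
        = fderiv ℝ (rhoF u) (qmap z) ((1:ℝ), (0:E3))
      rw [hevφ.fderiv_eq]
    have e2 : ∀ i : Fin 3, DjF i (BoxF (PAc A i)) (qmap z) = DjF i (JF u A i) (qmap z) := by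
      intro i
      show fderiv ℝ (BoxF (PAc A i)) (qmap z) ((0:ℝ), e3 i)
        = fderiv ℝ (JF u A i) (qmap z) ((0:ℝ), e3 i)
      rw [(hevA i).fderiv_eq]
    rw [e1, Finset.sum_congr rfl fun i _ => e2 i, hqz z]
    set t := z 0 with htdef
    set x : E3 := ι3 fun i => z i.succ with hxdef
    have hrhoD : DtF (rhoF u) (t, x) = 2 * ((starRingEnd ℂ) (u t x) * du t x).re := by
      refine partial_time_eq (((rhoF_cd hru).differentiable (by simp)) (t, x)) ?_
      have hre : HasDerivAt (fun s => (u s x).re) ((du t x).re) t :=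
        Complex.reCLM.hasFDerivAt.comp_hasDerivAt t (hdu t x)
      have him : HasDerivAt (fun s => (u s x).im) ((du t x).im) t :=
        Complex.imCLM.hasFDerivAt.comp_hasDerivAt t (hdu t x)
      have h := (hre.pow 2).add (him.pow 2)
      norm_num at h
      have h2 : HasDerivAt (fun s => rhoF u (s, x))
          (2 * (u t x).re * (du t x).re + 2 * (u t x).im * (du t x).im) t := h
      have hval : 2 * (u t x).re * (du t x).re + 2 * (u t x).im * (du t x).im
          = 2 * ((starRingEnd ℂ) (u t x) * du t x).re := by
        simp [Complex.mul_re, Complex.conj_re, Complex.conj_im]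
        ring
      rw [hval] at h2
      exact h2
    have hJD : ∀ i : Fin 3, DjF i (JF u A i) (t, x)
        = pdR i (fun y => currentJ (u t) (A t) i y) x := by
      intro i
      have h1 : pdR i (fun y => currentJ (u t) (A t) i y) x
          = fderiv ℝ (fun y => JF u A i (t, y)) x (e3 i) := by
        rw [show (fun y => JF u A i (t, y)) = fun y => currentJ (u t) (A t) i y from
          funext fun y => idJ i t y]
        rfl
      rw [h1, partial_spatial (((JF_cd hru hrA i).differentiable (by simp)) (t, x)) (e3 i)]
      rfl
    have hut : ContDiff ℝ (⊤ : ℕ∞) (u t) := hru.comp (contDiff_const.prodMk contDiff_id)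
    have hAt : ContDiff ℝ (⊤ : ℕ∞) (A t) := hrA.comp (contDiff_const.prodMk contDiff_id)
    have hcont := continuity_eq hut hAt (hSch t ⟨hz.1.le, hz.2.le⟩) x
    rw [hrhoD, Finset.sum_congr rfl fun i _ => hJD i]
    exact hcont
  -- conclude via the wave-uniqueness lemma
  have hzero := wave_zero T hT hW4 hwave hdata0 hdata1
  intro t ht x
  have hzv := hzero (Fin.cons t (fun i => x i)) ht
  have hq : qmap (Fin.cons t (fun i => x i) : R4) = (t, x) := rfl
  have hK0 : Kbig φ A (t, x) = 0 := by
    rw [← hq]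
    exact hzv
  rw [idK] at hK0
  exact hK0
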